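/- Let X be a star set for eigenvalue μ in a graph G, with H = G - X the star complement. Define ⟨x,y⟩ = xᵀ(μI - A(H))^{-1}y for vectors x,y, and for u ∈ X let b_u be the characteristic vector of N_H(u). Then ⟨b_u, b_u⟩ = μ for all u ∈ X; ⟨b_u, b_v⟩ = -1 if u ∼ v; and ⟨b_u, b_v⟩ = 0 if u ≠ v and u ≁ v. -/

import Mathlib

open Matrix

open scoped Classical

noncomputable section

variable {V : Type*} [Fintype V] [DecidableEq V]

/-- The real adjacency matrix of a graph. -/
def adjMat (G : SimpleGraph V) : Matrix V V ℝ :=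
  letI := Classical.decRel G.Adj
  G.adjMatrix ℝ

/-- `μ` is an (adjacency) eigenvalue of `G`. -/
def IsEigen (G : SimpleGraph V) (μ : ℝ) : Prop :=
  Module.End.HasEigenvalue (Matrix.toLin' (adjMat G)) μ

/-- The multiplicity of `μ` as an eigenvalue of `G`. -/
def eigMult (G : SimpleGraph V) (μ : ℝ) : ℕ :=
  Module.finrank ℝ (Module.End.eigenspace (Matrix.toLin' (adjMat G)) μ)

/-- `X` is a star set for `μ` in `G`: `|X|` equals the multiplicity of `μ` and `μ` is
not an eigenvalue of `G - X`. -/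
def IsStarSet (G : SimpleGraph V) (μ : ℝ) (X : Finset V) : Prop :=
  X.card = eigMult G μ ∧ ¬ IsEigen (G.induce ((↑X : Set V)ᶜ)) μ

/-- `μ` is a non-main eigenvalue: every `μ`-eigenvector is orthogonal to the
all-ones vector. -/
def IsNonMain (G : SimpleGraph V) (μ : ℝ) : Prop :=
  ∀ x : V → ℝ, (adjMat G).mulVec x = μ • x → x ⬝ᵥ (fun _ => 1) = 0


/-! Write `A(G)` in block form `[[A_X, B], [Bᵀ, C]]` with `C = A(H)`, so that `b_u` is the row `u`
of `B`. Since `μ` is not an eigenvalue of `C`, the lower block row of `A f = μ f` forces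
`f_H = (μI - C)⁻¹ Bᵀ f_X`: the `μ`-eigenspace lies in the graph `{(x, (μI - C)⁻¹ Bᵀ x)}`, a space
of dimension `|X|`. For a star set both have dimension `|X|`, so they coincide, and the upper block
row then reads `B (μI - C)⁻¹ Bᵀ = μI - A_X`. -/

namespace Matrix

variable {K α β : Type*} [Field K] [Fintype α]

def sumGraph (N : Matrix β α K) : (α → K) →ₗ[K] (α ⊕ β → K) where
  toFun x := Sum.elim x (N *ᵥ x)
  map_add' x y := by ext (i | j) <;> simp [mulVec_add]
  map_smul' c x := by ext (i | j) <;> simp [mulVec_smul]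

@[simp]
theorem sumGraph_comp_inl (N : Matrix β α K) (x : α → K) : sumGraph N x ∘ Sum.inl = x := rfl

@[simp]
theorem sumGraph_comp_inr (N : Matrix β α K) (x : α → K) :
    sumGraph N x ∘ Sum.inr = N *ᵥ x := rfl

theorem finrank_range_sumGraph (N : Matrix β α K) :
    Module.finrank K (LinearMap.range (sumGraph N)) = Fintype.card α := by
  have hinj : Function.Injective (sumGraph N) :=
    fun x y h => funext fun i => congrFun h (Sum.inl i)
  rw [LinearMap.finrank_range_of_inj hinj, Module.finrank_fintype_fun_eq_card]

variable [Fintype β]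

theorem mulVec_eq_smul_iff_toBlocks (A : Matrix (α ⊕ β) (α ⊕ β) K) (μ : K) (f : α ⊕ β → K) :
    A *ᵥ f = μ • f ↔
      A.toBlocks₁₁ *ᵥ (f ∘ Sum.inl) + A.toBlocks₁₂ *ᵥ (f ∘ Sum.inr) = μ • (f ∘ Sum.inl) ∧
      A.toBlocks₂₁ *ᵥ (f ∘ Sum.inl) + A.toBlocks₂₂ *ᵥ (f ∘ Sum.inr) = μ • (f ∘ Sum.inr) := by
  conv_lhs => rw [← fromBlocks_toBlocks A, fromBlocks_mulVec]
  constructor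
  · intro h
    exact ⟨funext fun i => congrFun h (Sum.inl i), funext fun j => congrFun h (Sum.inr j)⟩
  · rintro ⟨h₁, h₂⟩
    ext (i | j)
    · exact congrFun h₁ i
    · exact congrFun h₂ j

variable [DecidableEq α] [DecidableEq β]

theorem eigenspace_le_range_sumGraph (A : Matrix (α ⊕ β) (α ⊕ β) K) (μ : K)
    (hD : IsUnit (μ • 1 - A.toBlocks₂₂).det) :
    Module.End.eigenspace (toLin' A) μ ≤
      LinearMap.range (sumGraph ((μ • 1 - A.toBlocks₂₂)⁻¹ * A.toBlocks₂₁)) := by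
  intro f hf
  rw [Module.End.mem_eigenspace_iff, toLin'_apply, mulVec_eq_smul_iff_toBlocks] at hf
  have hlower : (μ • 1 - A.toBlocks₂₂) *ᵥ (f ∘ Sum.inr) = A.toBlocks₂₁ *ᵥ (f ∘ Sum.inl) := by
    rw [sub_mulVec, smul_mulVec, one_mulVec, ← hf.2]
    abel
  refine ⟨f ∘ Sum.inl, ?_⟩
  ext (i | j)
  · rfl
  · change (_ *ᵥ _) j = f (Sum.inr j)
    rw [← mulVec_mulVec, ← hlower, mulVec_mulVec, nonsing_inv_mul _ hD, one_mulVec]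
    rfl

theorem toBlocks₁₂_mul_inv_mul_toBlocks₂₁ (A : Matrix (α ⊕ β) (α ⊕ β) K) (μ : K)
    (hD : IsUnit (μ • 1 - A.toBlocks₂₂).det)
    (hmult : Module.finrank K (Module.End.eigenspace (toLin' A) μ) = Fintype.card α) :
    A.toBlocks₁₂ * (μ • 1 - A.toBlocks₂₂)⁻¹ * A.toBlocks₂₁ = μ • 1 - A.toBlocks₁₁ := by
  set N := (μ • 1 - A.toBlocks₂₂)⁻¹ * A.toBlocks₂₁
  have hE : Module.End.eigenspace (toLin' A) μ = LinearMap.range (sumGraph N) :=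
    Submodule.eq_of_le_of_finrank_eq (eigenspace_le_range_sumGraph A μ hD)
      (hmult.trans (finrank_range_sumGraph N).symm)
  refine mulVec_injective (funext fun x => ?_)
  have hx : sumGraph N x ∈ Module.End.eigenspace (toLin' A) μ := hE ▸ LinearMap.mem_range_self _ x
  rw [Module.End.mem_eigenspace_iff, toLin'_apply, mulVec_eq_smul_iff_toBlocks,
    sumGraph_comp_inl, sumGraph_comp_inr] at hx
  rw [Matrix.mul_assoc, ← mulVec_mulVec, sub_mulVec, smul_mulVec, one_mulVec, ← hx.1]
  abel

theorem hasEigenvalue_toLin'_iff_det_eq_zero (A : Matrix α α K) (μ : K) :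
    Module.End.HasEigenvalue (toLin' A) μ ↔ (μ • 1 - A).det = 0 := by
  rw [Module.End.hasEigenvalue_iff_isRoot_charpoly, charpoly_toLin', Polynomial.IsRoot.def,
    eval_charpoly, scalar_apply, smul_one_eq_diagonal]

end Matrix

theorem adjMat_apply {U : Type*} (G : SimpleGraph U) (v w : U) :
    adjMat G v w = if G.Adj v w then 1 else 0 := by
  by_cases h : G.Adj v w <;> simp [adjMat, h]

theorem isEigen_induce_iff {U W : Type*} [DecidableEq U] [Fintype W] [DecidableEq W]
    (G : SimpleGraph U) (s : Set U) [Fintype s] (e : W ≃ s) (μ : ℝ) :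
    IsEigen (G.induce s) μ ↔
      (μ • 1 - (adjMat G).submatrix (Subtype.val ∘ e) (Subtype.val ∘ e)).det = 0 := by
  have hsub : μ • 1 - (adjMat G).submatrix (Subtype.val ∘ e) (Subtype.val ∘ e) =
      (μ • 1 - adjMat (G.induce s)).submatrix e e := by
    ext i j
    simp [adjMat_apply, Matrix.one_apply]
  rw [IsEigen, Matrix.hasEigenvalue_toLin'_iff_det_eq_zero, hsub, Matrix.det_submatrix_equiv_self]

def inrEquivComplRangeInl (α β : Type*) [Fintype α] [DecidableEq α] [DecidableEq β] :
    β ≃ ((↑(Finset.univ.map ⟨Sum.inl, Sum.inl_injective⟩ : Finset (α ⊕ β)) : Set (α ⊕ β))ᶜ :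
      Set (α ⊕ β)) :=
  (Equiv.ofInjective Sum.inr Sum.inr_injective).trans (Equiv.setCongr (by ext (a | j) <;> simp))

/-- With `X` the set of left-hand vertices a star set for `μ`, `H = G - X` (with
adjacency matrix `C`), `b_u` the indicator vector of `N_H(u)` and
`⟨x,y⟩ = xᵀ(μI - A(H))⁻¹y`: `⟨b_u,b_u⟩ = μ`, `⟨b_u,b_v⟩ = -1` if `u ∼ v`, and
`⟨b_u,b_v⟩ = 0` if `u ≠ v`, `u ≁ v`. -/
theorem starSet_bilinear {α β : Type*} [Fintype α] [Fintype β] [DecidableEq α]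
    [DecidableEq β] (G : SimpleGraph (α ⊕ β)) (μ : ℝ)
    (X : Finset (α ⊕ β)) (hX : X = Finset.univ.map ⟨Sum.inl, Sum.inl_injective⟩)
    (hstar : IsStarSet G μ X)
    (C : Matrix β β ℝ) (hC : C = (adjMat G).submatrix Sum.inr Sum.inr)
    (b : α → β → ℝ) (hb : ∀ u j, b u j = if G.Adj (Sum.inl u) (Sum.inr j) then 1 else 0)
    (inner : (β → ℝ) → (β → ℝ) → ℝ)
    (hinner : ∀ x y, inner x y = x ⬝ᵥ ((μ • (1 : Matrix β β ℝ) - C)⁻¹ *ᵥ y)) :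
    (∀ u : α, inner (b u) (b u) = μ) ∧
    (∀ u v : α, G.Adj (Sum.inl u) (Sum.inl v) → inner (b u) (b v) = -1) ∧
    (∀ u v : α, u ≠ v → ¬ G.Adj (Sum.inl u) (Sum.inl v) → inner (b u) (b v) = 0) := by
  subst hX hC
  set A := adjMat G
  have hD : IsUnit (μ • 1 - A.toBlocks₂₂).det :=
    isUnit_iff_ne_zero.2 fun h =>
      hstar.2 ((isEigen_induce_iff G _ (inrEquivComplRangeInl α β) μ).2 h)
  have hmult : Module.finrank ℝ (Module.End.eigenspace (Matrix.toLin' A) μ) = Fintype.card α := by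
    rw [← eigMult, ← hstar.1, Finset.card_map, Finset.card_univ]
  have hb_row : ∀ u, b u = A.toBlocks₁₂ u := fun u => funext fun j => by
    rw [hb, ← adjMat_apply]
    rfl
  have hb_col : ∀ v, b v = fun j => A.toBlocks₂₁ j v := fun v => funext fun j => by
    rw [hb, G.adj_comm, ← adjMat_apply]
    rfl
  have hinner_eq : ∀ u v, inner (b u) (b v) =
      μ * (1 : Matrix α α ℝ) u v - adjMat G (Sum.inl u) (Sum.inl v) := fun u v =>
    calc inner (b u) (b v)
        _ = (A.toBlocks₁₂ * (μ • 1 - A.toBlocks₂₂)⁻¹ * A.toBlocks₂₁) u v := by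
          rw [hinner, hb_row, hb_col, Matrix.mul_assoc, Matrix.mul_apply']
          rfl
        _ = _ := by
          rw [Matrix.toBlocks₁₂_mul_inv_mul_toBlocks₂₁ A μ hD hmult]
          rfl
  refine ⟨fun u => ?_, fun u v huv => ?_, fun u v hne hnadj => ?_⟩
  · simp [hinner_eq, adjMat_apply]
  · have hne : u ≠ v := by
      rintro rfl
      exact G.irrefl huv
    simp [hinner_eq, adjMat_apply, huv, Matrix.one_apply_ne hne]
  · simp [hinner_eq, adjMat_apply, hne, hnadj]

end
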